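/- Let m be a positive integer, A_c an m×m complex matrix, λ_n ∈ ℂ, G : ℂ^m → ℂ continuous, and F_c : ℝ → ℂ^m, f_n : ℝ → ℂ continuous. Fix t ∈ ℝ, τ ≥ 0 and X ∈ ℂ^m. Let p : [t−τ, t] → ℂ^m be the solution of p′(s) = A_c p(s) + F_c(s) with p(t) = X, and let q_n : [t−τ, t] → ℂ solve q_n′(s) = λ_n q_n(s) + G(p(s)) + f_n(s) with q_n(t−τ) = 0. Then q_n(t) = ∫_{−τ}^{0} e^{−s λ_n} G( e^{sA_c} X − η(s) ) ds + ∫_{−τ}^{0} e^{−s λ_n} f_n(s+t) ds, where η(s) = ∫_s^0 e^{(s−r)A_c} F_c(r+t) dr. -/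

import Mathlib

open MeasureTheory intervalIntegral

/-- Matrix exponential over `ℂ`. -/
noncomputable def mexp {n : ℕ} (A : Matrix (Fin n) (Fin n) ℂ) : Matrix (Fin n) (Fin n) ℂ :=
  NormedSpace.exp A

/-!
Both equations are linear with constant coefficients. Multiplying by the integrating factors
`e^{(c - s) A_c}` and `e^{-s λ_n}` turns their left-hand sides into exact derivatives, and the
fundamental theorem of calculus gives the variation-of-constants formulas. After shifting time
by `t`, the formula for `p` with `c` the evaluation time reads `p (s + t) = e^{s A_c} X - η s`;
substituting this into the formula for `q_n`, started from `q_n (t - τ) = 0`, gives the claim.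
-/

open Set

theorem integral_eq_sub_of_hasDerivWithinAt_Icc {E : Type*} [NormedAddCommGroup E]
    [NormedSpace ℝ E] [CompleteSpace E] {f f' : ℝ → E} {a b : ℝ} (hab : a ≤ b)
    (hf : ∀ x ∈ Icc a b, HasDerivWithinAt f (f' x) (Icc a b) x)
    (hf' : ContinuousOn f' (Icc a b)) :
    ∫ x in a..b, f' x = f b - f a :=
  integral_eq_sub_of_hasDerivAt_of_le hab (fun x hx ↦ (hf x hx).continuousWithinAt)
    (fun x hx ↦ (hf x (Ioo_subset_Icc_self hx)).hasDerivAt (Icc_mem_nhds hx.1 hx.2))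
    (hf'.intervalIntegrable_of_Icc hab)

theorem hasDerivWithinAt_Icc_comp_add_const {E : Type*} [NormedAddCommGroup E]
    [NormedSpace ℝ E] {f f' : ℝ → E} {a b : ℝ} (c : ℝ)
    (hf : ∀ x ∈ Icc a b, HasDerivWithinAt f (f' x) (Icc a b) x) :
    ∀ x ∈ Icc (a - c) (b - c),
      HasDerivWithinAt (fun y ↦ f (y + c)) (f' (x + c)) (Icc (a - c) (b - c)) x := by
  intro x hx
  have hmaps : MapsTo (· + c) (Icc (a - c) (b - c)) (Icc a b) := fun y hy ↦
    ⟨by linarith [hy.1], by linarith [hy.2]⟩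
  exact ((hf _ (hmaps hx)).scomp x ((hasDerivWithinAt_id x _).add_const c) hmaps).congr_deriv
    (one_smul ℝ _)

theorem variation_of_constants_cexp {q g : ℝ → ℂ} {μ : ℂ} {a b : ℝ} (hab : a ≤ b)
    (hq : ∀ s ∈ Icc a b, HasDerivWithinAt q (μ * q s + g s) (Icc a b) s)
    (hg : ContinuousOn g (Icc a b)) :
    Complex.exp (-(b : ℂ) * μ) * q b - Complex.exp (-(a : ℂ) * μ) * q a
      = ∫ s in a..b, Complex.exp (-(s : ℂ) * μ) * g s := by
  have hexp : ∀ s : ℝ, HasDerivAt (fun r : ℝ ↦ Complex.exp (-(r : ℂ) * μ))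
      (-μ * Complex.exp (-(s : ℂ) * μ)) s := fun s ↦ by
    simpa [mul_comm] using ((hasDerivAt_id (s : ℂ)).neg.mul_const μ).cexp.comp_ofReal
  refine (integral_eq_sub_of_hasDerivWithinAt_Icc
    (f := fun s ↦ Complex.exp (-(s : ℂ) * μ) * q s) hab (fun s hs ↦ ?_) ?_).symm
  · exact ((hexp s).hasDerivWithinAt.mul (hq s hs)).congr_deriv (by ring)
  · exact (Continuous.continuousOn (by fun_prop)).mul hg

section MatrixExp

open Matrix

attribute [local instance] Matrix.linftyOpNormedAddCommGroup Matrix.linftyOpNormedRing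
  Matrix.linftyOpNormedSpace Matrix.linftyOpNormedAlgebra

variable {m : ℕ}

noncomputable def Matrix.mulVecCLM (n : ℕ) :
    Matrix (Fin n) (Fin n) ℂ →L[ℝ] (Fin n → ℂ) →L[ℝ] (Fin n → ℂ) :=
  LinearMap.toContinuousLinearMap <| LinearMap.toContinuousLinearMap.toLinearMap ∘ₗ
    LinearMap.mk₂ ℝ (· *ᵥ ·) add_mulVec (fun c M v ↦ smul_mulVec c M v)
      mulVec_add (fun c M v ↦ mulVec_smul M c v)

theorem hasDerivAt_mexp_sub_smul (A : Matrix (Fin m) (Fin m) ℂ) (c s : ℝ) :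
    HasDerivAt (fun r : ℝ ↦ mexp ((c - r) • A)) (-(A * mexp ((c - s) • A))) s :=
  (hasDerivAt_exp_smul_const' (𝕂 := ℝ) A (c - s)).comp_const_sub c s

theorem mexp_zero : mexp (0 : Matrix (Fin m) (Fin m) ℂ) = 1 :=
  NormedSpace.exp_zero

theorem variation_of_constants_mexp {A : Matrix (Fin m) (Fin m) ℂ} {x F : ℝ → Fin m → ℂ}
    {a b : ℝ} (c : ℝ) (hab : a ≤ b)
    (hx : ∀ s ∈ Icc a b, HasDerivWithinAt x (A *ᵥ x s + F s) (Icc a b) s)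
    (hF : ContinuousOn F (Icc a b)) :
    mexp ((c - b) • A) *ᵥ x b - mexp ((c - a) • A) *ᵥ x a
      = ∫ s in a..b, mexp ((c - s) • A) *ᵥ F s := by
  have hexp := hasDerivAt_mexp_sub_smul A c
  refine (integral_eq_sub_of_hasDerivWithinAt_Icc
    (f := fun s ↦ mulVecCLM m (mexp ((c - s) • A)) (x s)) hab (fun s hs ↦ ?_) ?_).symm
  · refine ((mulVecCLM m).hasDerivWithinAt_of_bilinear (hexp s).hasDerivWithinAt
      (hx s hs)).congr_deriv ?_
    have hcomm : A * mexp ((c - s) • A) = mexp ((c - s) • A) * A :=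
      (((Commute.refl A).smul_right (c - s)).exp_right).eq
    change mexp ((c - s) • A) *ᵥ (A *ᵥ x s + F s) + -(A * mexp ((c - s) • A)) *ᵥ x s = _
    rw [mulVec_add, neg_mulVec, hcomm, ← mulVec_mulVec]
    abel
  · have hexp_cont : Continuous fun s : ℝ ↦ mexp ((c - s) • A) :=
      continuous_iff_continuousAt.2 fun s ↦ (hexp s).continuousAt
    exact ((mulVecCLM m).continuous.comp hexp_cont).continuousOn.clm_apply hF

theorem eq_mexp_mulVec_sub_integral {A : Matrix (Fin m) (Fin m) ℂ} {x F : ℝ → Fin m → ℂ}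
    {a b : ℝ} (hab : a ≤ b)
    (hx : ∀ s ∈ Icc a b, HasDerivWithinAt x (A *ᵥ x s + F s) (Icc a b) s)
    (hF : ContinuousOn F (Icc a b)) :
    x a = mexp ((a - b) • A) *ᵥ x b - ∫ s in a..b, mexp ((a - s) • A) *ᵥ F s := by
  rw [← variation_of_constants_mexp a hab hx hF, sub_self, zero_smul, mexp_zero, one_mulVec,
    sub_sub_cancel]

end MatrixExp

theorem bf_modewise_solution_formula_time_dependent_forcing_general
    (m : ℕ)
    (A_c : Matrix (Fin m) (Fin m) ℂ) (lam_n : ℂ)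
    (G : (Fin m → ℂ) → ℂ) (hG : Continuous G)
    (F_c : ℝ → (Fin m → ℂ)) (hFc : Continuous F_c)
    (f_n : ℝ → ℂ) (hfn : Continuous f_n)
    (t τ : ℝ) (hτ : 0 ≤ τ) (X : Fin m → ℂ)
    (p : ℝ → (Fin m → ℂ))
    (hpt : p t = X)
    (hp : ∀ s ∈ Set.Icc (t - τ) t,
      HasDerivWithinAt p (A_c.mulVec (p s) + F_c s) (Set.Icc (t - τ) t) s)
    (q_n : ℝ → ℂ)
    (hq0 : q_n (t - τ) = 0)
    (hq : ∀ s ∈ Set.Icc (t - τ) t,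
      HasDerivWithinAt q_n (lam_n * q_n s + G (p s) + f_n s) (Set.Icc (t - τ) t) s)
    (η : ℝ → (Fin m → ℂ))
    (hη : ∀ s : ℝ, η s = ∫ r in s..0, (mexp ((s - r) • A_c)).mulVec (F_c (r + t))) :
    q_n t = (∫ s in (-τ)..0, Complex.exp (-(s : ℂ) * lam_n)
              * G ((mexp (s • A_c)).mulVec X - η s))
          + ∫ s in (-τ)..0, Complex.exp (-(s : ℂ) * lam_n) * f_n (s + t) := by
  have hτ' : -τ ≤ 0 := neg_nonpos.2 hτ
  have hp' := hasDerivWithinAt_Icc_comp_add_const t hp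
  have hq' := hasDerivWithinAt_Icc_comp_add_const t hq
  simp only [sub_sub_cancel_left, sub_self] at hp' hq'
  have hpc : ContinuousOn (fun u ↦ p (u + t)) (Icc (-τ) 0) :=
    fun u hu ↦ (hp' u hu).continuousWithinAt
  have hp_eq : ∀ u ∈ Icc (-τ) 0, p (u + t) = (mexp (u • A_c)).mulVec X - η u := by
    intro u hu
    have hsub : Icc u 0 ⊆ Icc (-τ) 0 := Icc_subset_Icc_left hu.1
    rw [eq_mexp_mulVec_sub_integral hu.2 (fun s hs ↦ (hp' s (hsub hs)).mono hsub)
      (hFc.comp (continuous_add_const t)).continuousOn, sub_zero, zero_add, hpt, hη]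
  have hq_eq := variation_of_constants_cexp hτ'
    (fun s hs ↦ (hq' s hs).congr_deriv (add_assoc ..))
    ((hG.comp_continuousOn hpc).add (hfn.comp (continuous_add_const t)).continuousOn)
  rw [zero_add, neg_add_eq_sub, hq0, Complex.ofReal_zero, neg_zero, zero_mul, Complex.exp_zero,
    one_mul, mul_zero, sub_zero] at hq_eq
  have hexp : Continuous fun s : ℝ ↦ Complex.exp (-(s : ℂ) * lam_n) := by fun_prop
  calc q_n t
      = ∫ s in (-τ)..0, Complex.exp (-(s : ℂ) * lam_n) * (G (p (s + t)) + f_n (s + t)) := hq_eq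
    _ = (∫ s in (-τ)..0, Complex.exp (-(s : ℂ) * lam_n) * G (p (s + t)))
          + ∫ s in (-τ)..0, Complex.exp (-(s : ℂ) * lam_n) * f_n (s + t) := by
      simp_rw [mul_add]
      exact intervalIntegral.integral_add
        ((hexp.continuousOn.mul (hG.comp_continuousOn hpc)).intervalIntegrable_of_Icc hτ')
        ((hexp.mul (hfn.comp (continuous_add_const t))).intervalIntegrable _ _)
    _ = _ := by
      congr 1
      refine integral_congr fun u hu ↦ ?_
      rw [uIcc_of_le hτ'] at hu
      rw [hp_eq u hu]

/-- Mode-wise solution formula for the backward–forward system with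
time-dependent forcing `F_c` on the resolved modes and `f_n` on the `n`-th unresolved mode. -/
theorem bf_modewise_solution_formula_time_dependent_forcing
    (m : ℕ) (hm : 0 < m)
    (A_c : Matrix (Fin m) (Fin m) ℂ) (lam_n : ℂ)
    (G : (Fin m → ℂ) → ℂ) (hG : Continuous G)
    (F_c : ℝ → (Fin m → ℂ)) (hFc : Continuous F_c)
    (f_n : ℝ → ℂ) (hfn : Continuous f_n)
    (t τ : ℝ) (hτ : 0 ≤ τ) (X : Fin m → ℂ)
    (p : ℝ → (Fin m → ℂ))
    (hpt : p t = X)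
    (hp : ∀ s ∈ Set.Icc (t - τ) t,
      HasDerivWithinAt p (A_c.mulVec (p s) + F_c s) (Set.Icc (t - τ) t) s)
    (q_n : ℝ → ℂ)
    (hq0 : q_n (t - τ) = 0)
    (hq : ∀ s ∈ Set.Icc (t - τ) t,
      HasDerivWithinAt q_n (lam_n * q_n s + G (p s) + f_n s) (Set.Icc (t - τ) t) s)
    (η : ℝ → (Fin m → ℂ))
    (hη : ∀ s : ℝ, η s = ∫ r in s..0, (mexp ((s - r) • A_c)).mulVec (F_c (r + t))) :
    q_n t = (∫ s in (-τ)..0, Complex.exp (-(s : ℂ) * lam_n)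
              * G ((mexp (s • A_c)).mulVec X - η s))
          + ∫ s in (-τ)..0, Complex.exp (-(s : ℂ) * lam_n) * f_n (s + t) :=
  bf_modewise_solution_formula_time_dependent_forcing_general m A_c lam_n G hG F_c hFc f_n hfn t τ
    hτ X p hpt hp q_n hq0 hq η hη
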